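/- arXiv:math/0510670 — 6 statements merged into one kernel-verified Lean document; each statement's English description precedes it below -/
import Mathlib

section
/- Let k be a field, V a k-vector space of finite odd dimension n, Q : V → k a quadratic form, and (b i)_{i ∈ Fin n} an orthogonal basis of V for Q, with associated element d := ι(b 0)·ι(b 1)⋯ι(b (n−1)) ∈ CliffordAlgebra Q. Then d lies in the center of CliffordAlgebra Q, i.e. d·x = x·d for every x ∈ CliffordAlgebra Q. -/
/-!
Orthogonality makes `ι (b j)` anticommute with the `n - 1` factors `ι (b i)`, `i ≠ j`, of `d`
and commute with the remaining one, so moving it across `d` costs the sign `(-1) ^ (n - 1)`,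
which is `1` for odd `n`. As the `ι (b j)` generate the Clifford algebra, `d` is central.
-/

open CliffordAlgebra

theorem mul_prod_ofFn_eq_smul_prod_mul {R A : Type*} [CommSemiring R] [Semiring A] [Algebra R A]
    {n : ℕ} (x : A) (f : Fin n → A) (c : Fin n → R) (h : ∀ i, x * f i = c i • (f i * x)) :
    x * (List.ofFn f).prod = (∏ i, c i) • ((List.ofFn f).prod * x) := by
  induction n with
  | zero => simp
  | succ n ih =>
    rw [List.ofFn_succ, List.prod_cons, Fin.prod_univ_succ, ← mul_assoc, h 0, smul_mul_assoc,
      mul_assoc, ih (fun i => f i.succ) (fun i => c i.succ) (fun i => h i.succ), mul_smul_comm,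
      smul_smul, mul_assoc]

theorem prod_update_const_neg_one {R : Type*} [CommMonoid R] [HasDistribNeg R] {n : ℕ}
    (j : Fin n) : ∏ i, Function.update (fun _ => (-1 : R)) j 1 i = (-1) ^ (n - 1) := by
  rw [Finset.prod_update_of_mem (Finset.mem_univ j), one_mul, Finset.prod_const,
    Finset.card_sdiff, Finset.card_univ, Fintype.card_fin]
  simp

section CliffordAlgebra

variable {R M : Type*} [CommRing R] [AddCommGroup M] [Module R M] {Q : QuadraticForm R M}

theorem ι_mul_prod_ofFn_ι_of_isOrtho {n : ℕ} (b : Fin n → M)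
    (horth : ∀ i j, i ≠ j → Q.IsOrtho (b i) (b j)) (j : Fin n) :
    ι Q (b j) * (List.ofFn fun i => ι Q (b i)).prod
      = (-1 : R) ^ (n - 1) • ((List.ofFn fun i => ι Q (b i)).prod * ι Q (b j)) := by
  rw [mul_prod_ofFn_eq_smul_prod_mul _ _ (Function.update (fun _ => (-1 : R)) j 1),
    prod_update_const_neg_one]
  intro i
  rcases eq_or_ne i j with rfl | hij
  · simp
  · rw [Function.update_of_ne hij, ι_mul_ι_comm_of_isOrtho (horth j i hij.symm), neg_one_smul]

theorem commute_ι_of_commute_ι_basis {I : Type*} {x : CliffordAlgebra Q} (b : Module.Basis I R M)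
    (h : ∀ i, Commute x (ι Q (b i))) (v : M) : Commute x (ι Q v) := by
  rw [← b.linearCombination_repr v, Finsupp.linearCombination_apply, Finsupp.sum, map_sum]
  exact Commute.sum_right _ _ _ fun i _ => by rw [map_smul]; exact (h i).smul_right _

theorem commute_of_commute_ι {x : CliffordAlgebra Q} (h : ∀ v, Commute x (ι Q v))
    (y : CliffordAlgebra Q) : Commute x y := by
  induction y using CliffordAlgebra.induction with
  | algebraMap r => exact (Algebra.commutes r x).symm
  | ι v => exact h v
  | mul y z hy hz => exact hy.mul_right hz
  | add y z hy hz => exact hy.add_right hz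

end CliffordAlgebra

/-- If `b` is an orthogonal basis for `Q` on a space of odd dimension `n` and
`d = ι(b 0) ⋯ ι(b (n-1))`, then `d` is central in the Clifford algebra. -/
theorem clifford_d_central_of_odd
    (k : Type*) [Field k]
    (V : Type*) [AddCommGroup V] [Module k V]
    (n : ℕ) (hn : Odd n) (Q : QuadraticForm k V) (b : Module.Basis (Fin n) k V)
    (horth : ∀ i j : Fin n, i ≠ j → QuadraticMap.polar Q (b i) (b j) = 0)
    (d : CliffordAlgebra Q) (hd : d = (List.ofFn fun i : Fin n => ι Q (b i)).prod) :
    ∀ x : CliffordAlgebra Q, d * x = x * d := by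
  have hortho : ∀ i j, i ≠ j → Q.IsOrtho (b i) (b j) := fun i j hij =>
    QuadraticMap.isOrtho_polarBilin.mp (horth i j hij)
  have hsign : (-1 : k) ^ (n - 1) = 1 := (Nat.Odd.sub_odd hn odd_one).neg_one_pow
  subst hd
  refine commute_of_commute_ι (commute_ι_of_commute_ι_basis b fun j => ?_)
  rw [Commute, SemiconjBy, eq_comm, ι_mul_prod_ofFn_ι_of_isOrtho b hortho j, hsign, one_smul]
end

section
/- Let k be a field, V a k-vector space of finite even dimension n, Q : V → k a quadratic form, and (b i)_{i ∈ Fin n} an orthogonal basis of V for Q, with associated element d := ι(b 0)·ι(b 1)⋯ι(b (n−1)) ∈ CliffordAlgebra Q. Then d lies in the even part evenOdd Q 0, and d commutes with every element of the even part: d·x = x·d for all x ∈ evenOdd Q 0. -/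
open CliffordAlgebra

/-!
Each generator `ι (b j)` anticommutes with the `n - 1` factors `ι (b i)`, `i ≠ j`, of `d` and
commutes with the remaining one, so `ι (b j) * d = (-1) ^ (n - 1) • (d * ι (b j)) = -(d * ι (b j))`
as `n` is even; by linearity `d` anticommutes with all of `ι Q V`. The even part is spanned by
products of pairs `ι m₁ * ι m₂`, which therefore commute with `d`. Finally `d` is a product of an
even number of odd elements, hence even.
-/

theorem mul_list_prod_ofFn_eq_prod_smul {k A : Type*} [CommSemiring k] [Semiring A] [Algebra k A]
    {n : ℕ} (a : A) (x : Fin n → A) (ε : Fin n → k)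
    (h : ∀ i, a * x i = ε i • (x i * a)) :
    a * (List.ofFn x).prod = (∏ i, ε i) • ((List.ofFn x).prod * a) := by
  induction n with
  | zero => simp
  | succ n ih =>
    rw [List.ofFn_succ, List.prod_cons, ← mul_assoc, h 0, smul_mul_assoc, mul_assoc,
      ih _ _ fun i => h i.succ, mul_smul_comm, smul_smul, Fin.prod_univ_succ, mul_assoc]

theorem Fintype.prod_ite_eq_one_neg_one {ι R : Type*} [Fintype ι] [DecidableEq ι] [CommMonoid R]
    [HasDistribNeg R] (j : ι) :
    ∏ i, (if i = j then 1 else -1 : R) = (-1) ^ (Fintype.card ι - 1) := by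
  simp [Finset.prod_ite, Finset.filter_ne', Finset.card_erase_of_mem]

namespace CliffordAlgebra

variable {k V : Type*} [CommRing k] [AddCommGroup V] [Module k V] {Q : QuadraticForm k V}

theorem ι_mul_list_prod_ofFn_of_polar_eq_zero {n : ℕ} (b : Fin n → V)
    (horth : ∀ i j : Fin n, i ≠ j → QuadraticMap.polar Q (b i) (b j) = 0) (j : Fin n) :
    ι Q (b j) * (List.ofFn fun i => ι Q (b i)).prod
      = (-1 : k) ^ (n - 1) • ((List.ofFn fun i => ι Q (b i)).prod * ι Q (b j)) := by
  have hsign : ∏ i, (if i = j then 1 else -1 : k) = (-1) ^ (n - 1) := by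
    rw [Fintype.prod_ite_eq_one_neg_one, Fintype.card_fin]
  rw [← hsign]
  refine mul_list_prod_ofFn_eq_prod_smul _ _ _ fun i => ?_
  split_ifs with hij
  · rw [hij, one_smul]
  · rw [neg_one_smul]
    exact ι_mul_ι_comm_of_isOrtho (QuadraticMap.isOrtho_polarBilin.1 <| horth j i (Ne.symm hij))

theorem ι_mul_eq_neg_mul_ι_of_basis {ι' : Type*} (b : Module.Basis ι' k V)
    {a : CliffordAlgebra Q} (h : ∀ i, ι Q (b i) * a = -(a * ι Q (b i))) (v : V) :
    ι Q v * a = -(a * ι Q v) :=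
  LinearMap.congr_fun
    (b.ext (f₁ := LinearMap.mulRight k a ∘ₗ ι Q) (f₂ := -(LinearMap.mulLeft k a ∘ₗ ι Q)) h) v

theorem commute_of_mem_evenOdd_zero {a : CliffordAlgebra Q}
    (h : ∀ v, ι Q v * a = -(a * ι Q v)) {x : CliffordAlgebra Q} (hx : x ∈ evenOdd Q 0) :
    Commute a x := by
  have h' : ∀ v, a * ι Q v = -(ι Q v * a) := fun v => by rw [h, neg_neg]
  induction x, hx using even_induction with
  | algebraMap r => exact Algebra.commute_algebraMap_right r a
  | add x y _ _ hx hy => exact hx.add_right hy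
  | ι_mul_ι_mul m₁ m₂ x _ hx =>
    have hpair : Commute a (ι Q m₁ * ι Q m₂) := by
      rw [Commute, SemiconjBy, ← mul_assoc, h', neg_mul, mul_assoc, h', mul_neg, neg_neg,
        mul_assoc]
    exact hpair.mul_right hx

theorem list_prod_ofFn_ι_mem_evenOdd {n : ℕ} (b : Fin n → V) :
    (List.ofFn fun i => ι Q (b i)).prod ∈ evenOdd Q n := by
  simpa using SetLike.list_prod_ofFn_mem_graded (fun _ => 1) _ fun i => ι_mem_evenOdd_one Q (b i)

end CliffordAlgebra

/-- If `b` is an orthogonal basis for `Q` on a space of even dimension `n` and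
`d = ι(b 0) ⋯ ι(b (n-1))`, then `d` lies in the even part `evenOdd Q 0` and commutes with
every element of the even part. -/
theorem clifford_d_central_in_even_of_even
    (k : Type*) [Field k]
    (V : Type*) [AddCommGroup V] [Module k V]
    (n : ℕ) (hn : Even n) (Q : QuadraticForm k V) (b : Module.Basis (Fin n) k V)
    (horth : ∀ i j : Fin n, i ≠ j → QuadraticMap.polar Q (b i) (b j) = 0)
    (d : CliffordAlgebra Q) (hd : d = (List.ofFn fun i : Fin n => ι Q (b i)).prod) :
    d ∈ evenOdd Q 0 ∧ ∀ x ∈ evenOdd Q 0, d * x = x * d := by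
  subst hd
  have hanti : ∀ v, ι Q v * (List.ofFn fun i => ι Q (b i)).prod
      = -((List.ofFn fun i => ι Q (b i)).prod * ι Q v) :=
    ι_mul_eq_neg_mul_ι_of_basis b fun j => by
      rw [ι_mul_list_prod_ofFn_of_polar_eq_zero b horth j,
        (Nat.Even.sub_odd j.pos hn odd_one).neg_one_pow, neg_one_smul]
  refine ⟨?_, fun x hx => commute_of_mem_evenOdd_zero hanti hx⟩
  simpa [(ZMod.natCast_eq_zero_iff_even).2 hn] using list_prod_ofFn_ι_mem_evenOdd (Q := Q) b
end

section
/- Let k be a field, V a k-vector space of finite dimension n, Q : V → k a quadratic form, and (b i)_{i ∈ Fin n} an orthogonal basis of V for Q, with associated element d := ι(b 0)·ι(b 1)⋯ι(b (n−1)) ∈ CliffordAlgebra Q. Then d·d = ((−1)^(n(n−1)/2) · ∏_{i ∈ Fin n} Q(b i)) · 1 in CliffordAlgebra Q (note that ∏_i Q(b i) is the determinant of the Gram matrix of Q in the orthogonal basis b). -/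
/-!
Orthogonal vectors anticommute in the Clifford algebra, so moving `ι v` past a product of `m`
vectors orthogonal to it costs the sign `(-1)^m`. Peeling off the first factor of
`d = ι v * S` gives `d * d = (-1)^m Q(v) (S * S)`, and the signs accumulate to
`(-1)^(0 + 1 + ⋯ + (n-1)) = (-1)^(n(n-1)/2)`.
-/

open CliffordAlgebra

namespace CliffordAlgebra

variable {R M : Type*} [CommRing R] [AddCommGroup M] [Module R M] {Q : QuadraticForm R M}

theorem prod_map_ι_mul_ι_of_isOrtho {t : List M} {v : M} (h : ∀ w ∈ t, Q.IsOrtho w v) :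
    (t.map (ι Q)).prod * ι Q v = (-1) ^ t.length * (ι Q v * (t.map (ι Q)).prod) := by
  induction t with
  | nil => simp
  | cons a s ih =>
    rw [List.forall_mem_cons] at h
    simp only [List.map_cons, List.prod_cons, List.length_cons, mul_assoc, ih h.2,
      ((Commute.neg_one_left _).pow_left _).left_comm, ι_mul_ι_mul_of_isOrtho _ h.1, pow_succ,
      mul_neg, neg_mul, mul_one]

theorem prod_map_ι_mul_self_of_pairwise_isOrtho {t : List M} (h : t.Pairwise Q.IsOrtho) :
    (t.map (ι Q)).prod * (t.map (ι Q)).prod =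
      algebraMap R _ ((-1) ^ (t.length * (t.length - 1) / 2) * (t.map Q).prod) := by
  induction t with
  | nil => simp
  | cons v s ih =>
    rw [List.pairwise_cons] at h
    have hv : ∀ w ∈ s, Q.IsOrtho w v := fun w hw => (h.1 w hw).symm
    have hsign : ((-1) ^ s.length : CliffordAlgebra Q) = algebraMap R _ ((-1) ^ s.length) := by
      simp
    calc (ι Q v * (s.map (ι Q)).prod) * (ι Q v * (s.map (ι Q)).prod)
        = (-1) ^ s.length * (ι Q v * ι Q v) * ((s.map (ι Q)).prod * (s.map (ι Q)).prod) := by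
          rw [mul_assoc, ← mul_assoc _ (ι Q v), prod_map_ι_mul_ι_of_isOrtho hv]
          simp only [mul_assoc, ((Commute.neg_one_left _).pow_left _).left_comm]
      _ = algebraMap R _ ((-1) ^ s.length * Q v *
            ((-1) ^ (s.length * (s.length - 1) / 2) * (s.map Q).prod)) := by
          simp only [ι_sq_scalar, ih h.2, hsign, map_mul]
      _ = _ := by
          rw [List.map_cons, List.prod_cons, List.length_cons, Nat.triangle_succ, pow_add]
          ring_nf

end CliffordAlgebra

/-- If `b` is an orthogonal basis for `Q` and `d = ι(b 0) ⋯ ι(b (n-1))`, then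
`d * d = (-1)^(n(n-1)/2) * ∏ i, Q (b i)`, the scalar being (up to sign) the determinant of
the Gram matrix of `Q` in the basis `b`. -/
theorem clifford_d_sq
    (k : Type*) [Field k]
    (V : Type*) [AddCommGroup V] [Module k V]
    (n : ℕ) (Q : QuadraticForm k V) (b : Module.Basis (Fin n) k V)
    (horth : ∀ i j : Fin n, i ≠ j → QuadraticMap.polar Q (b i) (b j) = 0)
    (d : CliffordAlgebra Q) (hd : d = (List.ofFn fun i : Fin n => ι Q (b i)).prod) :
    d * d = algebraMap k (CliffordAlgebra Q)
      ((-1 : k) ^ (n * (n - 1) / 2) * ∏ i : Fin n, Q (b i)) := by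
  have hb : (List.ofFn b).Pairwise Q.IsOrtho :=
    List.pairwise_ofFn.mpr fun i j hij =>
      QuadraticMap.isOrtho_polarBilin.mp (horth i j hij.ne)
  have hsq := prod_map_ι_mul_self_of_pairwise_isOrtho hb
  rw [List.map_ofFn, List.map_ofFn, List.length_ofFn, List.prod_ofFn] at hsq
  exact hd ▸ hsq
end

section
/- Let k be a field of characteristic ≠ 2, V a k-vector space of finite dimension n, and Q : V → k a quadratic form. If (b i)_{i ∈ Fin n} and (b' i)_{i ∈ Fin n} are two orthogonal bases of V for Q, with associated elements d_b := ι(b 0)⋯ι(b (n−1)) and d_{b'} := ι(b' 0)⋯ι(b' (n−1)) in CliffordAlgebra Q, then there exists a nonzero scalar c ∈ k such that d_{b'} = c · d_b. -/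
/-!
In characteristic `≠ 2`, `equivExterior Q` identifies `CliffordAlgebra Q` with the exterior
algebra as vector spaces. It is the change of form along `associated (-Q)`, and on a product of
pairwise `Q`-orthogonal vectors all contraction terms vanish, so it sends `ι(v₀)⋯ι(vₙ₋₁)` to
`v₀ ∧ ⋯ ∧ vₙ₋₁`. In top degree, wedges of two bases differ by the determinant, which is a unit.
-/

open CliffordAlgebra

theorem AlternatingMap.map_eq_basis_det_smul {R M N ι : Type*} [CommRing R] [AddCommGroup M]
    [Module R M] [AddCommGroup N] [Module R N] [Fintype ι] [DecidableEq ι]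
    (e : Module.Basis ι R M) (f : M [⋀^ι]→ₗ[R] N) (v : ι → M) :
    f v = e.det v • f e := by
  suffices f = (LinearMap.toSpanSingleton R N (f e)).compAlternatingMap e.det from
    DFunLike.congr_fun this v
  refine e.ext_alternating fun i hi => ?_
  let σ : Equiv.Perm ι := Equiv.ofBijective i (Finite.injective_iff_bijective.1 hi)
  change f (e ∘ σ) = e.det (e ∘ σ) • f e
  simp [AlternatingMap.map_perm, Module.Basis.det_self]

namespace CliffordAlgebra

variable {R M : Type*} [CommRing R] [AddCommGroup M] [Module R M]

theorem contractLeft_prod_ofFn_ι_eq_zero {Q : QuadraticForm R M} (d : Module.Dual R M) :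
    ∀ {m : ℕ} (v : Fin m → M), (∀ j, d (v j) = 0) →
      contractLeft d (List.ofFn fun j => ι Q (v j)).prod = 0
  | 0, _, _ => by simp
  | m + 1, v, hv => by
    rw [List.ofFn_succ, List.prod_cons, contractLeft_ι_mul, hv 0, zero_smul,
      contractLeft_prod_ofFn_ι_eq_zero d (fun j => v j.succ) (fun j => hv j.succ),
      mul_zero, sub_zero]

theorem changeForm_prod_ofFn_ι {Q Q' : QuadraticForm R M} {B : LinearMap.BilinForm R M}
    (h : B.toQuadraticMap = Q' - Q) :
    ∀ {m : ℕ} (v : Fin m → M), (∀ i j, i < j → B (v i) (v j) = 0) →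
      changeForm h (List.ofFn fun i => ι Q (v i)).prod = (List.ofFn fun i => ι Q' (v i)).prod
  | 0, _, _ => by simp
  | m + 1, v, hv => by
    have htail := changeForm_prod_ofFn_ι h (fun i => v i.succ)
      (fun i j hij => hv i.succ j.succ (Fin.succ_lt_succ_iff.2 hij))
    have hcontract := contractLeft_prod_ofFn_ι_eq_zero (Q := Q') (B (v 0)) (fun j => v j.succ)
      (fun j => hv 0 j.succ j.succ_pos)
    simp only [List.ofFn_succ, List.prod_cons, changeForm_ι_mul, htail, hcontract, sub_zero]

theorem equivExterior_prod_ofFn_ι [Invertible (2 : R)] {Q : QuadraticForm R M} {m : ℕ}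
    {v : Fin m → M} (hv : ∀ i j, i < j → QuadraticMap.polar Q (v i) (v j) = 0) :
    equivExterior Q (List.ofFn fun i => ι Q (v i)).prod = ExteriorAlgebra.ιMulti R m v := by
  refine changeForm_prod_ofFn_ι changeForm.associated_neg_proof v fun i j hij => ?_
  change ⅟(2 : Module.End R R) • QuadraticMap.polar (-⇑Q) (v i) (v j) = 0
  rw [QuadraticMap.polar_neg, hv i j hij, neg_zero, smul_zero]

end CliffordAlgebra

/-- Over a field of characteristic different from 2, the elements `d` associated to two
orthogonal bases of a quadratic form agree up to a nonzero scalar. -/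
theorem clifford_d_unique_up_to_scalar
    (k : Type*) [Field k] (hchar : (ringChar k) ≠ 2)
    (V : Type*) [AddCommGroup V] [Module k V]
    (n : ℕ) (Q : QuadraticForm k V)
    (b b' : Module.Basis (Fin n) k V)
    (horth : ∀ i j : Fin n, i ≠ j → QuadraticMap.polar Q (b i) (b j) = 0)
    (horth' : ∀ i j : Fin n, i ≠ j → QuadraticMap.polar Q (b' i) (b' j) = 0) :
    ∃ c : k, c ≠ 0 ∧
      (List.ofFn fun i : Fin n => ι Q (b' i)).prod =
        c • (List.ofFn fun i : Fin n => ι Q (b i)).prod := by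
  have : Invertible (2 : k) := invertibleOfNonzero (Ring.two_ne_zero hchar)
  refine ⟨b.det b', (b.isUnit_det b').ne_zero, (equivExterior Q).injective ?_⟩
  rw [map_smul, equivExterior_prod_ofFn_ι fun i j hij => horth' i j hij.ne,
    equivExterior_prod_ofFn_ι fun i j hij => horth i j hij.ne,
    (ExteriorAlgebra.ιMulti k n).map_eq_basis_det_smul b]
end

section
/- Let k be a field of characteristic 0, n = 2m+1 odd with m ≥ 1, and w : Fin n → k a weight function with w i ≠ 0 for all i ≠ Fin.last n and w (Fin.last n) = 0. Let Q := weightedSumSquares k w be the quadratic form on Fin n → k given by x ↦ Σ_i w i · (x i)², let (e i) be the standard basis (which is orthogonal for Q), and let d := ι(e 0)·ι(e 1)⋯ι(e (n−1)) ∈ CliffordAlgebra Q (d is central since n is odd). Let Q' := weightedSumSquares k (w ∘ Fin.castSucc) be the corresponding quadratic form on Fin (n−1) → k. Then the k-algebra homomorphism CliffordAlgebra Q' → (CliffordAlgebra Q)/⟨d⟩ induced by the isometric linear embedding (Fin (n−1) → k) → (Fin n → k) extending vectors by zero in the last coordinate is an isomorphism; in particular (CliffordAlgebra Q)/⟨d⟩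 is isomorphic as a k-algebra to CliffordAlgebra Q'. -/
open CliffordAlgebra QuadraticMap

private lemma rev_prod_mul_prod {k M : Type*} [Field k] [AddCommGroup M] [Module k M]
    (Q : QuadraticForm k M) (l : List M) :
    ((l.map (ι Q)).reverse.prod) * (l.map (ι Q)).prod =
      algebraMap k (CliffordAlgebra Q) (l.map Q).prod := by
  induction l with
  | nil => simp
  | cons v t ih =>
    simp only [List.map_cons, List.reverse_cons, List.prod_append, List.prod_cons,
      List.prod_nil, mul_one, map_mul]
    calc (t.map (ι Q)).reverse.prod * ι Q v * (ι Q v * (t.map (ι Q)).prod)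
        = (t.map (ι Q)).reverse.prod * (ι Q v * ι Q v) * (t.map (ι Q)).prod := by
          simp only [mul_assoc]
      _ = (t.map (ι Q)).reverse.prod * algebraMap k _ (Q v) * (t.map (ι Q)).prod := by
          rw [ι_sq_scalar]
      _ = algebraMap k _ (Q v) * ((t.map (ι Q)).reverse.prod * (t.map (ι Q)).prod) := by
          rw [← Algebra.commutes (Q v)]
          simp only [mul_assoc]
      _ = algebraMap k _ (Q v) * algebraMap k _ ((t.map Q).prod) := by rw [ih]

/-- Let `n = 2m+1` be odd, let `w` be a weight function on `Fin n` which vanishes exactly at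
the last index, `Q` the associated weighted sum of squares quadratic form, `d` the product of
the images of the standard basis vectors in the Clifford algebra (central since `n` is odd),
and `Q'` the weighted sum of squares form on `Fin 2m → k` with weights `w ∘ Fin.castSucc`.
Then the `k`-algebra homomorphism `CliffordAlgebra Q' → (CliffordAlgebra Q) / ⟨d⟩` induced by
the isometric embedding extending vectors by zero in the last coordinate is an isomorphism;
in particular `(CliffordAlgebra Q) / ⟨d⟩ ≃ₐ[k] CliffordAlgebra Q'`. -/
theorem clifford_quotient_d_eq_smaller_clifford
    (k : Type*) [Field k] [CharZero k]
    (m : ℕ) (hm : 1 ≤ m)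
    (w : Fin (2 * m + 1) → k)
    (hw : ∀ i : Fin (2 * m + 1), i ≠ Fin.last (2 * m) → w i ≠ 0)
    (hwlast : w (Fin.last (2 * m)) = 0)
    (Q : QuadraticForm k (Fin (2 * m + 1) → k))
    (hQ : Q = weightedSumSquares k w)
    (d : CliffordAlgebra Q)
    (hd : d = (List.ofFn fun i : Fin (2 * m + 1) =>
      ι Q (Pi.basisFun k (Fin (2 * m + 1)) i)).prod)
    (Q' : QuadraticForm k (Fin (2 * m) → k))
    (hQ' : Q' = weightedSumSquares k (w ∘ Fin.castSucc))
    (f : (Fin (2 * m) → k) →ₗ[k] (Fin (2 * m + 1) → k))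
    (hf : f = Function.ExtendByZero.linearMap k (Fin.castSucc : Fin (2 * m) → Fin (2 * m + 1)))
    (hisom : ∀ x : Fin (2 * m) → k, Q (f x) = Q' x) :
    Function.Bijective (fun x : CliffordAlgebra Q' =>
      (TwoSidedIdeal.span {d}).ringCon.mk'
        (CliffordAlgebra.map (⟨f, hisom⟩ : Q' →qᵢ Q) x)) ∧
    Nonempty ((TwoSidedIdeal.span {d}).ringCon.Quotient ≃ₐ[k] CliffordAlgebra Q') := by
  classical
  -- the projection, an isometry from `Q` to `Q'`
  set p : (Fin (2 * m + 1) → k) →ₗ[k] (Fin (2 * m) → k) :=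
    LinearMap.funLeft k k Fin.castSucc with hp_def
  have hp : ∀ x : Fin (2 * m + 1) → k, Q' (p x) = Q x := by
    intro x
    rw [hQ, hQ', weightedSumSquares_apply, weightedSumSquares_apply, Fin.sum_univ_castSucc]
    simp [hwlast, hp_def]
  have hpf : ∀ x : Fin (2 * m) → k, p (f x) = x := by
    intro x
    funext i
    simp only [hf, hp_def, LinearMap.funLeft_apply, Function.ExtendByZero.linearMap_apply]
    exact (Fin.castSucc_injective _).extend_apply x 0 i
  have hflast : ∀ x : Fin (2 * m) → k, f x (Fin.last (2 * m)) = 0 := by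
    intro x
    simp only [hf, Function.ExtendByZero.linearMap_apply]
    rw [Function.extend_apply']
    · rfl
    · rintro ⟨a, ha⟩
      exact absurd ha (Fin.castSucc_lt_last a).ne
  set I := TwoSidedIdeal.span {d} with hI_def
  let mkA : CliffordAlgebra Q →ₐ[k] I.ringCon.Quotient :=
    { I.ringCon.mk' with commutes' := fun r => rfl }
  let F : CliffordAlgebra Q' →ₐ[k] CliffordAlgebra Q :=
    CliffordAlgebra.map (⟨f, hisom⟩ : Q' →qᵢ Q)
  let P : CliffordAlgebra Q →ₐ[k] CliffordAlgebra Q' :=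
    CliffordAlgebra.map (⟨p, hp⟩ : Q →qᵢ Q')
  -- `P ∘ F = id`
  have hPF : ∀ x : CliffordAlgebra Q', P (F x) = x := by
    have : P.comp F = AlgHom.id k (CliffordAlgebra Q') := by
      apply CliffordAlgebra.hom_ext
      apply LinearMap.ext
      intro v
      simp [P, F, CliffordAlgebra.map_apply_ι, hpf v]
    intro x
    exact congrArg (· x) (congrArg DFunLike.coe this)
  -- `P d = 0`
  have hPd : P d = 0 := by
    rw [hd, map_list_prod, List.map_ofFn]
    apply List.prod_eq_zero
    rw [List.mem_ofFn]
    refine ⟨Fin.last (2 * m), ?_⟩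
    have hps : p (Pi.single (Fin.last (2 * m)) 1 : Fin (2 * m + 1) → k) = 0 := by
      funext i
      simp only [hp_def, LinearMap.funLeft_apply, Pi.zero_apply]
      exact Pi.single_eq_of_ne (Fin.castSucc_lt_last i).ne 1
    have : P (ι Q (Pi.basisFun k (Fin (2 * m + 1)) (Fin.last (2 * m)))) = 0 := by
      rw [show P (ι Q (Pi.basisFun k (Fin (2 * m + 1)) (Fin.last (2 * m)))) =
        ι Q' ((⟨p, hp⟩ : Q →qᵢ Q') (Pi.basisFun k (Fin (2 * m + 1)) (Fin.last (2 * m)))) from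
        CliffordAlgebra.map_apply_ι _ _]
      rw [show ((⟨p, hp⟩ : Q →qᵢ Q') (Pi.basisFun k (Fin (2 * m + 1)) (Fin.last (2 * m)))) =
        p (Pi.basisFun k (Fin (2 * m + 1)) (Fin.last (2 * m))) from rfl, Pi.basisFun_apply, hps,
        map_zero]
    simpa [P] using this
  -- membership criteria
  have hmem0 : ∀ x : CliffordAlgebra Q, x ∈ I ↔ I.ringCon.mk' x = 0 := by
    intro x
    rw [← TwoSidedIdeal.ker_ringCon_mk' I, TwoSidedIdeal.mem_ker,
      TwoSidedIdeal.ker_ringCon_mk' I]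
  -- `ι Q e_last ∈ I`
  have hQe : ∀ j : Fin (2 * m + 1), Q (Pi.basisFun k (Fin (2 * m + 1)) j) = w j := by
    intro j
    rw [hQ, Pi.basisFun_apply, weightedSumSquares_apply]
    rw [Finset.sum_eq_single j]
    · simp
    · intro i _ hij
      simp [Pi.single_eq_of_ne hij]
    · intro h
      exact absurd (Finset.mem_univ j) h
  have hιlast : ι Q (Pi.basisFun k (Fin (2 * m + 1)) (Fin.last (2 * m))) ∈ I := by
    set l : List (Fin (2 * m + 1) → k) :=
      List.ofFn (fun i : Fin (2 * m) => Pi.basisFun k (Fin (2 * m + 1)) i.castSucc) with hl_def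
    have hd2 : d = (l.map (ι Q)).prod * ι Q (Pi.basisFun k (Fin (2 * m + 1)) (Fin.last (2 * m))) := by
      rw [hd, List.ofFn_succ']
      rw [List.prod_concat, hl_def, List.map_ofFn]
      rfl
    set s : k := (l.map Q).prod with hs_def
    have hs : s ≠ 0 := by
      rw [hs_def, hl_def, List.map_ofFn, List.prod_ofFn]
      apply Finset.prod_ne_zero_iff.mpr
      intro i _
      rw [Function.comp_apply, hQe]
      exact hw _ (Fin.castSucc_lt_last i).ne
    have key : (l.map (ι Q)).reverse.prod * d =
        s • ι Q (Pi.basisFun k (Fin (2 * m + 1)) (Fin.last (2 * m))) := by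
      rw [hd2, ← mul_assoc, rev_prod_mul_prod, ← hs_def, Algebra.smul_def]
    have hmem : (l.map (ι Q)).reverse.prod * d ∈ I := by
      refine I.mul_mem_left _ _ ?_
      exact TwoSidedIdeal.subset_span rfl
    have : ι Q (Pi.basisFun k (Fin (2 * m + 1)) (Fin.last (2 * m))) =
        s⁻¹ • ((l.map (ι Q)).reverse.prod * d) := by
      rw [key, smul_smul, inv_mul_cancel₀ hs, one_smul]
    rw [this, Algebra.smul_def]
    exact I.mul_mem_left _ _ hmem
  -- decomposition of a vector
  have hvdec : ∀ v : Fin (2 * m + 1) → k, v - f (p v) =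
      v (Fin.last (2 * m)) • Pi.basisFun k (Fin (2 * m + 1)) (Fin.last (2 * m)) := by
    intro v
    funext j
    rw [Pi.basisFun_apply]
    induction j using Fin.lastCases with
    | last => simp [hflast]
    | cast i =>
      simp only [Pi.sub_apply, Pi.smul_apply, smul_eq_mul]
      rw [Pi.single_eq_of_ne (Fin.castSucc_lt_last i).ne, mul_zero, sub_eq_zero]
      have := hpf (p v)
      calc v i.castSucc = p v i := rfl
        _ = p (f (p v)) i := by rw [hpf]
        _ = f (p v) i.castSucc := rfl
  -- the congruence: `mkA (F (P x)) = mkA x`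
  have hcong : ∀ x : CliffordAlgebra Q, mkA (F (P x)) = mkA x := by
    have : mkA.comp (F.comp P) = mkA := by
      apply CliffordAlgebra.hom_ext
      apply LinearMap.ext
      intro v
      simp only [AlgHom.comp_toLinearMap, LinearMap.coe_comp, Function.comp_apply,
        AlgHom.toLinearMap_apply]
      rw [show P (ι Q v) = ι Q' (p v) from CliffordAlgebra.map_apply_ι _ v,
        show F (ι Q' (p v)) = ι Q (f (p v)) from CliffordAlgebra.map_apply_ι _ _]
      rw [← sub_eq_zero, ← _root_.map_sub, ← _root_.map_sub]
      rw [show f (p v) - v = (-(v (Fin.last (2 * m)))) •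
          Pi.basisFun k (Fin (2 * m + 1)) (Fin.last (2 * m)) from by
        rw [neg_smul, ← hvdec v, neg_sub]]
      rw [_root_.map_smul, _root_.map_smul]
      rw [show mkA (ι Q (Pi.basisFun k (Fin (2 * m + 1)) (Fin.last (2 * m)))) = 0 from
        (hmem0 _).mp hιlast]
      rw [smul_zero]
    intro x
    exact congrArg (· x) (congrArg DFunLike.coe this)
  -- elements of `I` are killed by `P`
  have hIker : ∀ x ∈ I, P x = 0 := by
    intro x hx
    refine (TwoSidedIdeal.mem_ker P.toRingHom).mp ?_
    refine TwoSidedIdeal.mem_span_iff.mp hx _ ?_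
    intro y hy
    rw [Set.mem_singleton_iff] at hy
    subst hy
    exact SetLike.mem_coe.mpr ((TwoSidedIdeal.mem_ker _).mpr hPd)
  have hbij : Function.Bijective (fun x : CliffordAlgebra Q' => I.ringCon.mk' (F x)) := by
    constructor
    · intro a b hab
      have h1 : F a - F b ∈ I := by
        rw [← TwoSidedIdeal.ker_ringCon_mk' I, TwoSidedIdeal.mem_ker, _root_.map_sub, sub_eq_zero]
        exact hab
      have h2 : P (F a - F b) = 0 := hIker _ h1
      rw [_root_.map_sub, hPF, hPF, sub_eq_zero] at h2
      exact h2
    · intro y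
      induction y using Quotient.inductionOn' with
      | h x =>
        refine ⟨P x, ?_⟩
        have := hcong x
        exact this
  exact ⟨hbij, ⟨(AlgEquiv.ofBijective (mkA.comp F) hbij).symm⟩⟩
end

section
/- Let k be a commutative ring, V a free k-module with basis (b i)_{i ∈ Fin n}, and Q : V → k a quadratic form. In the k-algebra A := MvPolynomial (Fin n) k ⊗[k] CliffordAlgebra Q (the tensor product of k-algebras, in which the two factors commute), set δ := Σ_{i ∈ Fin n} (X i) ⊗ ι(b i). Then δ·δ = (Σ_{i ∈ Fin n} Q(b i)·(X i)² + Σ_{i < j} polar Q (b i) (b j)·(X i · X j)) ⊗ 1, i.e. δ squares to the element of MvPolynomial (Fin n) k ⊗ 1 given by the polynomial representing Q in the basis b. -/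
open CliffordAlgebra
open scoped TensorProduct

/-! Expanding `δ * δ`, each diagonal term gives `ι v * ι v = Q v`, and each off-diagonal pair
combines, because the polynomial coefficients commute, into
`ι v * ι w + ι w * ι v = polar Q v w`. -/

theorem Finset.sum_sum_eq_sum_diag_add_sum_lt {ι M : Type*} [LinearOrder ι] [AddCommMonoid M]
    (s : Finset ι) (F : ι → ι → M) :
    ∑ i ∈ s, ∑ j ∈ s, F i j = ∑ i ∈ s, F i i + ∑ i ∈ s, ∑ j ∈ s with i < j, (F i j + F j i) := by
  have decompose : ∀ i j, F i j =
      (if i = j then F i j else 0) + (if i < j then F i j else 0) + if j < i then F i j else 0 := by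
    intro i j
    rcases lt_trichotomy i j with h | rfl | h
    · simp [h, h.ne, h.not_gt]
    · simp
    · simp [h, h.ne', h.not_gt]
  have diag : ∑ i ∈ s, ∑ j ∈ s, (if i = j then F i j else 0) = ∑ i ∈ s, F i i :=
    Finset.sum_congr rfl fun i hi => by rw [Finset.sum_ite_eq, if_pos hi]
  have swap : ∑ i ∈ s, ∑ j ∈ s, (if j < i then F i j else 0) =
      ∑ i ∈ s, ∑ j ∈ s, (if i < j then F j i else 0) := Finset.sum_comm
  simp_rw [Finset.sum_filter, ite_add_zero]
  conv_lhs => enter [2, i, 2, j]; rw [decompose i j]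
  simp only [Finset.sum_add_distrib, diag, swap, add_assoc]

section TensorClifford

variable {k V A : Type*} [CommRing k] [AddCommGroup V] [Module k V] {Q : QuadraticForm k V}

theorem tmul_ι_mul_self [Ring A] [Algebra k A] (a : A) (v : V) :
    (a ⊗ₜ[k] ι Q v) * (a ⊗ₜ[k] ι Q v) = (Q v • a ^ 2) ⊗ₜ[k] (1 : CliffordAlgebra Q) := by
  rw [Algebra.TensorProduct.tmul_mul_tmul, ι_sq_scalar, Algebra.algebraMap_eq_smul_one,
    TensorProduct.tmul_smul, TensorProduct.smul_tmul', sq]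

theorem tmul_ι_mul_tmul_ι_add_swap [CommRing A] [Algebra k A] (a b : A) (v w : V) :
    (a ⊗ₜ[k] ι Q v) * (b ⊗ₜ[k] ι Q w) + (b ⊗ₜ[k] ι Q w) * (a ⊗ₜ[k] ι Q v) =
      (QuadraticMap.polar Q v w • (a * b)) ⊗ₜ[k] (1 : CliffordAlgebra Q) := by
  rw [Algebra.TensorProduct.tmul_mul_tmul, Algebra.TensorProduct.tmul_mul_tmul, mul_comm b a,
    ← TensorProduct.tmul_add, ι_mul_ι_add_swap, Algebra.algebraMap_eq_smul_one,
    TensorProduct.tmul_smul, TensorProduct.smul_tmul']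

end TensorClifford

/-- In the tensor product of the polynomial algebra and the Clifford algebra, the element
`δ = ∑ i, X i ⊗ ι (b i)` squares to the polynomial representing `Q` in the basis `b`,
tensored with `1`. -/
theorem clifford_delta_sq
    (k : Type*) [CommRing k]
    (V : Type*) [AddCommGroup V] [Module k V]
    (n : ℕ) (b : Module.Basis (Fin n) k V) (Q : QuadraticForm k V)
    (δ : MvPolynomial (Fin n) k ⊗[k] CliffordAlgebra Q)
    (hδ : δ = ∑ i : Fin n, MvPolynomial.X i ⊗ₜ[k] ι Q (b i)) :
    δ * δ =
      (∑ i : Fin n, Q (b i) • (MvPolynomial.X i ^ 2)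
        + ∑ i : Fin n, ∑ j ∈ Finset.univ.filter (fun j : Fin n => i < j),
            QuadraticMap.polar Q (b i) (b j) • (MvPolynomial.X i * MvPolynomial.X j))
        ⊗ₜ[k] (1 : CliffordAlgebra Q) := by
  rw [hδ, Finset.sum_mul_sum, Finset.sum_sum_eq_sum_diag_add_sum_lt]
  simp only [tmul_ι_mul_self, tmul_ι_mul_tmul_ι_add_swap, ← TensorProduct.sum_tmul,
    ← TensorProduct.add_tmul]
end
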